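/- Fix n experts, z ≥ 2 outcomes, ε > 0, x > 0, and y ∈ ℝ. Let f_1, …, f_n ∈ ℝ^z be probability vectors, and define the weights p_{i,j} = (ε + D(f_i, f_j))⁻¹ / Σ_{m=1}^{n} (ε + D(f_i, f_m))⁻¹, where D(f, g) = sqrt( (Σ_{x'=1}^{z} (f_{x'} − g_{x'})²) / z ). Let R be the quadratic scoring rule R(f, e) = 2·f_e − Σ_{x'=1}^{z} f_{x'}², and let S be the positive affine transformation S(f, e) = x·R(f, e) + y. Then for all experts i, j, k: p_{i,j} < p_{i,k} if and only if E_{f_i}[S(f_k)] > E_{f_i}[S(f_j)], where E_f[S(g)] = Σ_{e=1}^{z} f_e · S(g, e). That is, any positive affine transformation of the quadratic scoring rule is effective with respect to the set of weights assigned according to the distance-based formula. -/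

import Mathlib

open Finset

/-- A probability vector: nonnegative entries summing to 1. -/
def ProbVec {z : ℕ} (f : Fin z → ℝ) : Prop :=
  (∀ k, 0 ≤ f k) ∧ ∑ k, f k = 1

/-- Root-mean-square deviation between two opinions. -/
noncomputable def D {z : ℕ} (f g : Fin z → ℝ) : ℝ :=
  Real.sqrt ((∑ k, (f k - g k) ^ 2) / z)

/-- The weight that expert `i` assigns to expert `j`, given opinions `f`:
`p_{i,j} = (ε + D(f_i, f_j))⁻¹ / Σ_m (ε + D(f_i, f_m))⁻¹`. -/
noncomputable def weight {n z : ℕ} (ε : ℝ) (f : Fin n → Fin z → ℝ) (i j : Fin n) : ℝ :=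
  (ε + D (f i) (f j))⁻¹ / ∑ m, (ε + D (f i) (f m))⁻¹

/-- The quadratic scoring rule: `R(f, e) = 2 f_e − Σ_k f_k²`. -/
noncomputable def QSR {z : ℕ} (f : Fin z → ℝ) (e : Fin z) : ℝ :=
  2 * f e - ∑ k, f k ^ 2

/-- The `f`-expected score of reporting `g` under the quadratic scoring rule. -/
noncomputable def expScore {z : ℕ} (f g : Fin z → ℝ) : ℝ :=
  ∑ e, f e * QSR g e

/-! For a probability vector `f`, the `f`-expected quadratic score of a report `g` is
`Σ f_e² − Σ (f_e − g_e)²`, so it ranks reports by their squared distance from `f`. The weights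
rank experts by `D`, a monotone function of the same squared distance, and a positive affine
transformation of the score preserves the ranking. -/

theorem D_lt_D_iff {z : ℕ} (f g h : Fin z → ℝ) :
    D f g < D f h ↔ ∑ k, (f k - g k) ^ 2 < ∑ k, (f k - h k) ^ 2 := by
  rcases Nat.eq_zero_or_pos z with rfl | hz
  · simp [D]
  have hz' : (0 : ℝ) < z := by exact_mod_cast hz
  rw [D, D, Real.sqrt_lt_sqrt_iff (by positivity), div_lt_div_iff_of_pos_right hz']

theorem weight_lt_weight_iff {n z : ℕ} {ε : ℝ} (hε : 0 < ε) (f : Fin n → Fin z → ℝ)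
    (i j k : Fin n) : weight ε f i j < weight ε f i k ↔ D (f i) (f k) < D (f i) (f j) := by
  have hpos : ∀ m, 0 < ε + D (f i) (f m) := fun m =>
    add_pos_of_pos_of_nonneg hε (Real.sqrt_nonneg _)
  have hnorm : 0 < ∑ m, (ε + D (f i) (f m))⁻¹ :=
    sum_pos (fun m _ => inv_pos.2 (hpos m)) ⟨i, mem_univ i⟩
  rw [weight, weight, div_lt_div_iff_of_pos_right hnorm, inv_lt_inv₀ (hpos j) (hpos k),
    add_lt_add_iff_left]

theorem expScore_eq {z : ℕ} {f : Fin z → ℝ} (hf : ∑ e, f e = 1) (g : Fin z → ℝ) :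
    expScore f g = ∑ e, f e ^ 2 - ∑ e, (f e - g e) ^ 2 := by
  have hexpand : ∑ e, (f e - g e) ^ 2 = ∑ e, f e ^ 2 - 2 * ∑ e, f e * g e + ∑ e, g e ^ 2 := by
    rw [mul_sum, ← sum_sub_distrib, ← sum_add_distrib]
    exact sum_congr rfl fun e _ => by ring
  have hscore : expScore f g = 2 * ∑ e, f e * g e - (∑ e, f e) * ∑ e, g e ^ 2 := by
    rw [expScore, mul_sum, sum_mul, ← sum_sub_distrib]
    exact sum_congr rfl fun e _ => by rw [QSR]; ring
  rw [hscore, hexpand, hf]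
  ring

theorem expScore_lt_expScore_iff {z : ℕ} {f : Fin z → ℝ} (hf : ∑ e, f e = 1)
    (g h : Fin z → ℝ) :
    expScore f g < expScore f h ↔ ∑ e, (f e - h e) ^ 2 < ∑ e, (f e - g e) ^ 2 := by
  rw [expScore_eq hf, expScore_eq hf, sub_lt_sub_iff_left]

theorem sum_mul_affine_QSR {z : ℕ} {f : Fin z → ℝ} (hf : ∑ e, f e = 1) (x y : ℝ)
    (g : Fin z → ℝ) : ∑ e, f e * (x * QSR g e + y) = x * expScore f g + y := by
  simp only [mul_add, sum_add_distrib, ← sum_mul, hf, one_mul, expScore,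
    mul_sum]
  congr 1
  exact sum_congr rfl fun e _ => by ring

theorem affine_quadratic_effective_wrt_weights_general {n z : ℕ}
    {ε : ℝ} (hε : 0 < ε) {x : ℝ} (hx : 0 < x) (y : ℝ)
    (f : Fin n → Fin z → ℝ) (hf : ∀ i, ProbVec (f i)) :
    ∀ i j k : Fin n,
      weight ε f i j < weight ε f i k ↔
        (∑ e, f i e * (x * QSR (f k) e + y)) > (∑ e, f i e * (x * QSR (f j) e + y)) := by
  intro i j k
  have hfi : ∑ e, f i e = 1 := (hf i).2
  rw [weight_lt_weight_iff hε, D_lt_D_iff, gt_iff_lt, sum_mul_affine_QSR hfi,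
    sum_mul_affine_QSR hfi, add_lt_add_iff_right, mul_lt_mul_iff_right₀ hx,
    expScore_lt_expScore_iff hfi]

/-- Any positive affine transformation `S(f, e) = x · R(f, e) + y` of the quadratic
scoring rule is effective with respect to the distance-based weights. -/
theorem affine_quadratic_effective_wrt_weights {n z : ℕ} (hz : 2 ≤ z)
    {ε : ℝ} (hε : 0 < ε) {x : ℝ} (hx : 0 < x) (y : ℝ)
    (f : Fin n → Fin z → ℝ) (hf : ∀ i, ProbVec (f i)) :
    ∀ i j k : Fin n,
      weight ε f i j < weight ε f i k ↔
        (∑ e, f i e * (x * QSR (f k) e + y)) > (∑ e, f i e * (x * QSR (f j) e + y)) :=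
  affine_quadratic_effective_wrt_weights_general hε hx y f hf
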